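/- Let γ ∈ (0,1) and G ⊆ G_γ. Then for every ψ ∈ ℋ(G): for every g ∈ G the family (U(g−h)·ψ_h)_{h∈G} is summable, and Σ_{g∈G} ρ_g·|(π/ρ_g)·Σ_{h∈G} U(g−h)·ψ_h|² ≤ (π·C_U·𝔖₀(α_U)/(γ·ρ₀))²·‖ψ‖_G². -/

import Mathlib

noncomputable section

open scoped RealInnerProductSpace BigOperators
open Real

/-- `ℝ^d` with the Euclidean structure. -/
abbrev V (d : ℕ) : Type := EuclideanSpace ℝ (Fin d)

/-- `Λ` is a full-rank lattice: the set of integer linear combinations of some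
basis of `ℝ^d`. -/
def IsLattice {d : ℕ} (Λ : Set (V d)) : Prop :=
  ∃ b : Module.Basis (Fin d) ℝ (V d),
    Λ = {x : V d | ∃ c : Fin d → ℤ, x = ∑ i, (c i : ℝ) • b i}

/-- The vector `ν = (0,…,0,1)`. -/
def nu (d : ℕ) (hd : 0 < d) : V d :=
  EuclideanSpace.single ⟨d - 1, Nat.sub_lt hd Nat.one_pos⟩ (1 : ℝ)

/-- `ρ_g = (k₀+g)·ν`. -/
def rho {d : ℕ} (k₀ ν g : V d) : ℝ := ⟪k₀ + g, ν⟫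

/-- `σ_g = |k₀|² - |k₀+g|²`. -/
def sig {d : ℕ} (k₀ g : V d) : ℝ := ‖k₀‖ ^ 2 - ‖k₀ + g‖ ^ 2

/-- `G_γ = {g ∈ Λ : ρ_g ≥ γ·ρ₀}`. -/
def Gset {d : ℕ} (Λ : Set (V d)) (k₀ ν : V d) (γ : ℝ) : Set (V d) :=
  {g ∈ Λ | γ * ⟪k₀, ν⟫ ≤ rho k₀ ν g}

/-- `G^M = {g ∈ Λ : |g| ≤ M}`. -/
def GMball {d : ℕ} (Λ : Set (V d)) (M : ℝ) : Set (V d) := {g ∈ Λ | ‖g‖ ≤ M}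

/-- `𝔖_m(β) = Σ_{κ∈Λ} |κ|^m·exp(-β·|κ|)`. -/
def Sm {d : ℕ} (Λ : Set (V d)) (m : ℕ) (β : ℝ) : ℝ :=
  ∑' κ : Λ, ‖(κ : V d)‖ ^ m * Real.exp (-β * ‖(κ : V d)‖)

/-- The norm `‖φ‖_G` of `ℋ(G)`. -/
def normOn {d : ℕ} (k₀ ν : V d) (G : Set (V d)) (φ : V d → ℂ) : ℝ :=
  Real.sqrt (∑' g : G, rho k₀ ν (g : V d) * ‖φ (g : V d)‖ ^ 2)

/-- The exponentially weighted norm `‖φ‖_α`. -/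
def normA {d : ℕ} (k₀ ν : V d) (G : Set (V d)) (α : ℝ) (φ : V d → ℂ) : ℝ :=
  Real.sqrt (∑' g : G,
    Real.exp (2 * α * ‖(g : V d)‖) * rho k₀ ν (g : V d) * ‖φ (g : V d)‖ ^ 2)

/-- `φ|_G` is a member of `ℋ(G)`, i.e. `‖φ‖_G² < ∞`. -/
def MemH {d : ℕ} (k₀ ν : V d) (G : Set (V d)) (φ : V d → ℂ) : Prop :=
  Summable fun g : G => rho k₀ ν (g : V d) * ‖φ (g : V d)‖ ^ 2

/-- The DHW equations on the beam set `G`: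
`(ρ_g/π)·ψ_g′(z) = i(σ_g ψ_g(z) + Σ_{h∈G} U(g-h) ψ_h(z))` for `g ∈ G`,
including summability of the interaction sum. -/
def SatDHW {d : ℕ} (k₀ ν : V d) (U : V d → ℂ) (G : Set (V d)) (ψ : ℝ → V d → ℂ) : Prop :=
  ∀ z : ℝ, ∀ g ∈ G,
    Summable (fun h : G => U (g - (h : V d)) * ψ z (h : V d)) ∧
    HasDerivAt (fun w => ψ w g)
      (((π / rho k₀ ν g : ℝ) : ℂ) * (Complex.I *
        (((sig k₀ g : ℝ) : ℂ) * ψ z g +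
          ∑' h : G, U (g - (h : V d)) * ψ z (h : V d)))) z

/-- `z ↦ (w(g)·ψ_g(z))_{g∈G}` is a differentiable curve in `ℋ(G)`, encoded by
the weighted embedding `g ↦ w(g)·√ρ_g·ψ_g(z)` into `ℓ²(G)`. -/
def CurveDiff {d : ℕ} (k₀ ν : V d) (G : Set (V d)) (w : V d → ℝ) (ψ : ℝ → V d → ℂ) : Prop :=
  ∃ A : ℝ → lp (fun _ : G => ℂ) 2, Differentiable ℝ A ∧
    ∀ (z : ℝ) (g : G),
      A z g = ((w (g : V d) * Real.sqrt (rho k₀ ν (g : V d)) : ℝ) : ℂ) * ψ z (g : V d)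

/-- Tame strong solution of `DHW_G`. -/
def IsTameSol {d : ℕ} (k₀ ν : V d) (U : V d → ℂ) (G : Set (V d)) (ψ : ℝ → V d → ℂ) : Prop :=
  SatDHW k₀ ν U G ψ ∧ CurveDiff k₀ ν G (fun _ => 1) ψ ∧
  ∀ z : ℝ,
    Summable (fun g : G => |sig k₀ (g : V d)| * ‖ψ z (g : V d)‖ ^ 2) ∧
    Summable (fun q : G × G =>
      ‖U ((q.1 : V d) - (q.2 : V d))‖ * ‖ψ z (q.2 : V d)‖ * ‖ψ z (q.1 : V d)‖)

/-- `α`-tame strong solution of `DHW_G`. -/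
def IsAlphaTameSol {d : ℕ} (k₀ ν : V d) (U : V d → ℂ) (G : Set (V d)) (α : ℝ)
    (ψ : ℝ → V d → ℂ) : Prop :=
  SatDHW k₀ ν U G ψ ∧ CurveDiff k₀ ν G (fun _ => 1) ψ ∧
  CurveDiff k₀ ν G (fun g => Real.exp (α * ‖g‖)) ψ ∧
  ∀ z : ℝ,
    Summable (fun g : G =>
      Real.exp (2 * α * ‖(g : V d)‖) * |sig k₀ (g : V d)| * ‖ψ z (g : V d)‖ ^ 2) ∧
    Summable (fun q : G × G =>
      Real.exp (α * ‖(q.1 : V d)‖ + α * ‖(q.2 : V d)‖) *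
        ‖U ((q.1 : V d) - (q.2 : V d))‖ * ‖ψ z (q.2 : V d)‖ * ‖ψ z (q.1 : V d)‖)

open Classical in
/-- Initial condition `ψ(0) = δ` on `G`. -/
def InitDelta {d : ℕ} (G : Set (V d)) (ψ : ℝ → V d → ℂ) : Prop :=
  ∀ g ∈ G, ψ 0 g = if g = (0 : V d) then 1 else 0

/-! The kernel `exp (-α_U |g - h|)` on `G × G` has all row and column sums at most `𝔖₀(α_U)`,
since `h ↦ g - h` embeds `G` into the lattice; that lattice sum is finite because
`exp (-β t) ≤ n! (β t)⁻ⁿ` and `Σ_{κ ≠ 0} |κ|⁻ⁿ` converges for `n` above the rank.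
Schur's test then bounds the convolution by `C_U 𝔖₀(α_U)` on the unweighted `ℓ²(G)`, and the
weights `ρ_g ≥ γ ρ₀` cost one factor `1 / (γ ρ₀)` on each side. -/

open scoped ENNReal

theorem IsLattice.exists_eq_span {d : ℕ} {Λ : Set (V d)} (hΛ : IsLattice Λ) :
    ∃ b : Module.Basis (Fin d) ℝ (V d), Λ = Submodule.span ℤ (Set.range b) := by
  obtain ⟨b, rfl⟩ := hΛ
  refine ⟨b, Set.ext fun x => ?_⟩
  simp [Submodule.mem_span_range_iff_exists_fun, eq_comm, Int.cast_smul_eq_zsmul]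

theorem ZLattice.summable_exp_neg_mul_norm {E : Type*} [NormedAddCommGroup E] [NormedSpace ℝ E]
    [FiniteDimensional ℝ E] (L : Submodule ℤ E) [DiscreteTopology L] {β : ℝ} (hβ : 0 < β) :
    Summable fun z : L => Real.exp (-β * ‖(z : E)‖) := by
  set n := Module.finrank ℤ L + 1
  have hexp : ∀ t > 0, Real.exp (-β * t) ≤ n.factorial / β ^ n * t⁻¹ ^ n := fun t ht => calc
    Real.exp (-β * t) = (Real.exp (β * t))⁻¹ := by rw [neg_mul, Real.exp_neg]
    _ ≤ ((β * t) ^ n / n.factorial)⁻¹ :=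
      inv_anti₀ (by positivity) (Real.pow_div_factorial_le_exp _ (by positivity) n)
    _ = n.factorial / β ^ n * t⁻¹ ^ n := by rw [mul_pow, inv_pow]; field_simp
  refine Summable.of_norm_bounded_eventually
    ((ZLattice.summable_norm_pow_inv L n (by omega)).mul_left (n.factorial / β ^ n)) ?_
  filter_upwards [Filter.eventually_cofinite_ne 0] with z hz
  rw [Real.norm_of_nonneg (Real.exp_pos _).le]
  exact hexp _ (norm_pos_iff.2 (by simpa using hz))

theorem summable_and_tsum_comp_sub_le {E S : Type*} [AddCommGroup E] [SetLike S E]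
    [AddSubgroupClass S E] {L : S} {f : E → ℝ} (hf : ∀ x, 0 ≤ f x)
    (hs : Summable fun z : L => f z) {G : Set E} (hG : G ⊆ L) {x : E} (hx : x ∈ L) :
    Summable (fun h : G => f (x - h)) ∧ ∑' h : G, f (x - h) ≤ ∑' z : L, f z := by
  let e : G → L := fun h => ⟨x - h, sub_mem hx (hG h.2)⟩
  have he : Function.Injective e := fun h h' hh =>
    Subtype.ext <| sub_right_injective (congrArg Subtype.val hh)
  exact ⟨hs.comp_injective he, tsum_comp_le_tsum_of_inj hs (fun z => hf z) he⟩

theorem IsLattice.sub_mem {d : ℕ} {Λ : Set (V d)} (hΛ : IsLattice Λ) {x y : V d} (hx : x ∈ Λ)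
    (hy : y ∈ Λ) : x - y ∈ Λ := by
  obtain ⟨b, rfl⟩ := hΛ.exists_eq_span
  exact Submodule.sub_mem _ hx hy

theorem IsLattice.summable_and_tsum_exp_neg_mul_norm_sub_le {d : ℕ} {Λ : Set (V d)}
    (hΛ : IsLattice Λ) {β : ℝ} (hβ : 0 < β) {G : Set (V d)} (hG : G ⊆ Λ) {x : V d}
    (hx : x ∈ Λ) :
    Summable (fun h : G => Real.exp (-β * ‖x - h‖)) ∧
      ∑' h : G, Real.exp (-β * ‖x - h‖) ≤ Sm Λ 0 β := by
  obtain ⟨b, rfl⟩ := hΛ.exists_eq_span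
  simpa [Sm] using summable_and_tsum_comp_sub_le (f := fun x => Real.exp (-β * ‖x‖))
    (fun _ => (Real.exp_pos _).le) (ZLattice.summable_exp_neg_mul_norm _ hβ) hG hx

open MeasureTheory in
theorem ENNReal.tsum_mul_sq_le {ι : Type*} (w c : ι → ℝ≥0∞) :
    (∑' i, w i * c i) ^ 2 ≤ (∑' i, w i) * ∑' i, w i * c i ^ 2 := by
  let : MeasurableSpace ι := ⊤
  have hsq : ∀ x : ℝ≥0∞, (x ^ (1 / 2 : ℝ)) ^ 2 = x := fun x => by
    rw [← ENNReal.rpow_natCast, ← ENNReal.rpow_mul]; norm_num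
  have hterm : ∀ i, w i ^ (1 / 2 : ℝ) * (w i * c i ^ 2) ^ (1 / 2 : ℝ) = w i * c i := fun i => by
    rw [ENNReal.mul_rpow_of_nonneg _ _ (by norm_num), ← mul_assoc, ← sq, hsq,
      ← ENNReal.rpow_natCast, ← ENNReal.rpow_mul]
    norm_num
  have holder := ENNReal.lintegral_mul_norm_pow_le (μ := Measure.count) (f := w)
    (g := fun i => w i * c i ^ 2) measurable_from_top.aemeasurable
    measurable_from_top.aemeasurable (p := 1 / 2) (q := 1 / 2) (by norm_num) (by norm_num)
    (by norm_num)
  simp only [lintegral_count, hterm] at holder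
  calc (∑' i, w i * c i) ^ 2
      ≤ ((∑' i, w i) ^ (1 / 2 : ℝ) * (∑' i, w i * c i ^ 2) ^ (1 / 2 : ℝ)) ^ 2 :=
        pow_le_pow_left' holder 2
    _ = _ := by rw [mul_pow, hsq, hsq]

theorem ENNReal.schur_test {ι κ : Type*} (K : ι → κ → ℝ≥0∞) (c : κ → ℝ≥0∞) {A B : ℝ≥0∞}
    (hrow : ∀ i, ∑' j, K i j ≤ A) (hcol : ∀ j, ∑' i, K i j ≤ B) :
    ∑' i, (∑' j, K i j * c j) ^ 2 ≤ A * B * ∑' j, c j ^ 2 := calc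
  ∑' i, (∑' j, K i j * c j) ^ 2 ≤ ∑' i, A * ∑' j, K i j * c j ^ 2 :=
      ENNReal.tsum_le_tsum fun i =>
        (ENNReal.tsum_mul_sq_le _ _).trans (mul_le_mul_left (hrow i) _)
  _ = A * ∑' j, (∑' i, K i j) * c j ^ 2 := by
      rw [ENNReal.tsum_mul_left, ENNReal.tsum_comm]; simp_rw [ENNReal.tsum_mul_right]
  _ ≤ A * ∑' j, B * c j ^ 2 := by gcongr with j; exact hcol j
  _ = A * B * ∑' j, c j ^ 2 := by rw [ENNReal.tsum_mul_left, mul_assoc]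

theorem summable_of_tsum_ofReal_ne_top {α : Type*} {f : α → ℝ} (hf : ∀ a, 0 ≤ f a)
    (h : ∑' a, ENNReal.ofReal (f a) ≠ ⊤) : Summable f :=
  (ENNReal.summable_toReal h).congr fun a => ENNReal.toReal_ofReal (hf a)

theorem Real.schur_test {ι κ : Type*} {K : ι → κ → ℝ} {c : κ → ℝ} {A B : ℝ}
    (hK : ∀ i j, 0 ≤ K i j) (hc : ∀ j, 0 ≤ c j) (hA : 0 ≤ A) (hB : 0 ≤ B)
    (hrow : ∀ i, Summable (K i)) (hrow_le : ∀ i, ∑' j, K i j ≤ A)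
    (hcol : ∀ j, Summable (K · j)) (hcol_le : ∀ j, ∑' i, K i j ≤ B)
    (hc2 : Summable fun j => c j ^ 2) :
    (∀ i, Summable fun j => K i j * c j) ∧ Summable (fun i => (∑' j, K i j * c j) ^ 2) ∧
      ∑' i, (∑' j, K i j * c j) ^ 2 ≤ A * B * ∑' j, c j ^ 2 := by
  -- In `ℝ≥0∞` every sum exists; summability in `ℝ` is then read off from finiteness.
  have hKc : ∀ i j, 0 ≤ K i j * c j := fun i j => mul_nonneg (hK i j) (hc j)
  have hschur := ENNReal.schur_test (fun i j => ENNReal.ofReal (K i j))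
    (fun j => ENNReal.ofReal (c j)) (A := ENNReal.ofReal A) (B := ENNReal.ofReal B)
    (fun i => by
      rw [← ENNReal.ofReal_tsum_of_nonneg (hK i) (hrow i)]
      exact ENNReal.ofReal_le_ofReal (hrow_le i))
    (fun j => by
      rw [← ENNReal.ofReal_tsum_of_nonneg (hK · j) (hcol j)]
      exact ENNReal.ofReal_le_ofReal (hcol_le j))
  simp_rw [← ENNReal.ofReal_mul (hK _ _), ← ENNReal.ofReal_pow (hc _),
    ← ENNReal.ofReal_tsum_of_nonneg (fun j => sq_nonneg (c j)) hc2,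
    ← ENNReal.ofReal_mul hA, ← ENNReal.ofReal_mul (mul_nonneg hA hB)] at hschur
  have hfin := ne_top_of_le_ne_top ENNReal.ofReal_ne_top hschur
  have hrow_summable : ∀ i, Summable fun j => K i j * c j := fun i =>
    summable_of_tsum_ofReal_ne_top (hKc i) fun h => hfin <|
      eq_top_mono (ENNReal.le_tsum (f := fun i => (∑' j, ENNReal.ofReal (K i j * c j)) ^ 2) i)
        (by simp [h])
  simp_rw [fun i => (ENNReal.ofReal_tsum_of_nonneg (hKc i) (hrow_summable i)).symm,
    ← ENNReal.ofReal_pow (tsum_nonneg (hKc _))] at hschur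
  have hsq_summable := summable_of_tsum_ofReal_ne_top (fun i => sq_nonneg _)
    (ne_top_of_le_ne_top ENNReal.ofReal_ne_top hschur)
  rw [← ENNReal.ofReal_tsum_of_nonneg (fun i => sq_nonneg _) hsq_summable,
    ENNReal.ofReal_le_ofReal_iff (by positivity)] at hschur
  exact ⟨hrow_summable, hsq_summable, hschur⟩

theorem summable_sq_and_tsum_sq_le_of_le_weight {ι : Type*} {ρ c : ι → ℝ} {w : ℝ} (hw : 0 < w)
    (hρ : ∀ i, w ≤ ρ i) (hs : Summable fun i => ρ i * c i ^ 2) :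
    Summable (fun i => c i ^ 2) ∧ ∑' i, c i ^ 2 ≤ (∑' i, ρ i * c i ^ 2) / w := by
  have hle : ∀ i, c i ^ 2 ≤ ρ i * c i ^ 2 / w := fun i => by
    rw [le_div_iff₀ hw]; nlinarith [sq_nonneg (c i), hρ i]
  have hsq := Summable.of_nonneg_of_le (fun i => sq_nonneg (c i)) hle (hs.div_const w)
  exact ⟨hsq, (hsq.tsum_le_tsum hle (hs.div_const w)).trans_eq tsum_div_const⟩

theorem mul_norm_ofReal_div_mul_sq (a : ℝ) {ρ : ℝ} (hρ : ρ ≠ 0) (z : ℂ) :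
    ρ * ‖((a / ρ : ℝ) : ℂ) * z‖ ^ 2 = a ^ 2 / ρ * ‖z‖ ^ 2 := by
  rw [norm_mul, Complex.norm_real, Real.norm_eq_abs, mul_pow, sq_abs]
  field_simp

theorem summable_and_tsum_weighted_norm_sq_tsum_mul_le {ι : Type*} (k : ι → ι → ℂ)
    (K : ι → ι → ℝ) (ρ : ι → ℝ) (ψ : ι → ℂ) (a : ℝ) {A w : ℝ} (hA : 0 ≤ A) (hw : 0 < w)
    (hρ : ∀ i, w ≤ ρ i) (hkK : ∀ i j, ‖k i j‖ ≤ K i j)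
    (hrow : ∀ i, Summable (K i)) (hrow_le : ∀ i, ∑' j, K i j ≤ A)
    (hcol : ∀ j, Summable (K · j)) (hcol_le : ∀ j, ∑' i, K i j ≤ A)
    (hψ : Summable fun i => ρ i * ‖ψ i‖ ^ 2) :
    (∀ i, Summable fun j => k i j * ψ j) ∧
      ∑' i, ρ i * ‖((a / ρ i : ℝ) : ℂ) * ∑' j, k i j * ψ j‖ ^ 2 ≤
        (a * A / w) ^ 2 * ∑' i, ρ i * ‖ψ i‖ ^ 2 := by
  obtain ⟨hψ2, hψ2_le⟩ := summable_sq_and_tsum_sq_le_of_le_weight hw hρ hψ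
  obtain ⟨hKψ, hKψ2, hschur⟩ := Real.schur_test (c := fun j => ‖ψ j‖)
    (fun i j => (norm_nonneg _).trans (hkK i j)) (fun j => norm_nonneg _) hA hA
    hrow hrow_le hcol hcol_le hψ2
  have hkψ : ∀ i j, ‖k i j * ψ j‖ ≤ K i j * ‖ψ j‖ := fun i j => by
    rw [norm_mul]; gcongr; exact hkK i j
  refine ⟨fun i => Summable.of_norm_bounded (hKψ i) (hkψ i), ?_⟩
  have hterm : ∀ i, ρ i * ‖((a / ρ i : ℝ) : ℂ) * ∑' j, k i j * ψ j‖ ^ 2 ≤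
      a ^ 2 / w * (∑' j, K i j * ‖ψ j‖) ^ 2 := fun i => by
    rw [mul_norm_ofReal_div_mul_sq _ (hw.trans_le (hρ i)).ne']
    gcongr
    · exact hρ i
    · exact tsum_of_norm_bounded (hKψ i).hasSum (hkψ i)
  have hbound := hKψ2.mul_left (a ^ 2 / w)
  calc _ ≤ ∑' i, a ^ 2 / w * (∑' j, K i j * ‖ψ j‖) ^ 2 :=
        (Summable.of_nonneg_of_le (fun i => mul_nonneg (hw.le.trans (hρ i)) (sq_nonneg _))
          hterm hbound).tsum_le_tsum hterm hbound
    _ = a ^ 2 / w * ∑' i, (∑' j, K i j * ‖ψ j‖) ^ 2 := tsum_mul_left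
    _ ≤ a ^ 2 / w * (A * A * ((∑' i, ρ i * ‖ψ i‖ ^ 2) / w)) := by
        gcongr
        exact hschur.trans (by gcongr)
    _ = _ := by field_simp

/-- bound on the scattering operator `R⁻¹𝕌` on `ℋ(G)`:
for `G ⊆ G_γ` and `ψ ∈ ℋ(G)`, the convolution sums are well defined and
`Σ_g ρ_g·|(π/ρ_g)·Σ_h U(g-h)ψ_h|² ≤ (π·C_U·𝔖₀(α_U)/(γ·ρ₀))²·‖ψ‖_G²`. -/
theorem stmt16 {d : ℕ} (hd : 0 < d) (Λ : Set (V d)) (hΛ : IsLattice Λ)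
    (k₀ : V d) (hk : 0 < ⟪k₀, nu d hd⟫)
    (U : V d → ℂ)
    (CU αU : ℝ) (hCU : 0 < CU) (hαU : 0 < αU)
    (hUbd : ∀ g ∈ Λ, ‖U g‖ ≤ CU * Real.exp (-αU * ‖g‖))
    (γ : ℝ) (hγ : γ ∈ Set.Ioo (0 : ℝ) 1)
    (G : Set (V d)) (hG : G ⊆ Gset Λ k₀ (nu d hd) γ) :
    ∀ ψ : V d → ℂ,
      (Summable fun g : G => rho k₀ (nu d hd) (g : V d) * ‖ψ (g : V d)‖ ^ 2) →
      (∀ g : G, Summable fun h : G => U ((g : V d) - (h : V d)) * ψ (h : V d)) ∧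
      (∑' g : G, rho k₀ (nu d hd) (g : V d) *
          ‖((π / rho k₀ (nu d hd) (g : V d) : ℝ) : ℂ) *
            ∑' h : G, U ((g : V d) - (h : V d)) * ψ (h : V d)‖ ^ 2) ≤
        (π * CU * Sm Λ 0 αU / (γ * ⟪k₀, nu d hd⟫)) ^ 2 *
          ∑' g : G, rho k₀ (nu d hd) (g : V d) * ‖ψ (g : V d)‖ ^ 2 := by
  intro ψ hψ
  have hGΛ : G ⊆ Λ := fun g hg => (hG hg).1
  have hkernel : ∀ x ∈ Λ, Summable (fun h : G => CU * Real.exp (-αU * ‖x - h‖)) ∧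
      ∑' h : G, CU * Real.exp (-αU * ‖x - h‖) ≤ CU * Sm Λ 0 αU := fun x hx => by
    obtain ⟨hsum, hle⟩ := hΛ.summable_and_tsum_exp_neg_mul_norm_sub_le hαU hGΛ hx
    exact ⟨hsum.mul_left CU, by rw [tsum_mul_left]; gcongr⟩
  have hcol : ∀ h ∈ Λ, Summable (fun g : G => CU * Real.exp (-αU * ‖(g : V d) - h‖)) ∧
      ∑' g : G, CU * Real.exp (-αU * ‖(g : V d) - h‖) ≤ CU * Sm Λ 0 αU := by
    simpa only [norm_sub_rev] using hkernel
  have hS : 0 ≤ Sm Λ 0 αU := tsum_nonneg fun _ => by positivity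
  rw [mul_assoc π]
  exact summable_and_tsum_weighted_norm_sq_tsum_mul_le (fun g h : G => U (g - h))
    (fun g h : G => CU * Real.exp (-αU * ‖(g : V d) - h‖)) (fun g => rho k₀ (nu d hd) g)
    (fun g => ψ g) π (by positivity) (mul_pos hγ.1 hk) (fun g => (hG g.2).2)
    (fun g h => hUbd _ (hΛ.sub_mem (hGΛ g.2) (hGΛ h.2)))
    (fun g => (hkernel g (hGΛ g.2)).1) (fun g => (hkernel g (hGΛ g.2)).2)
    (fun h => (hcol h (hGΛ h.2)).1) (fun h => (hcol h (hGΛ h.2)).2) hψ
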